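/- Let ρ > 0 and γ > 0. For every integer N ≥ 0: if N is even, then ∫_{−∞}^{∞} ln(1 + ρ·e^{z−2γ})·e^{−z²/(8γ)}·dz/√(8πγ) ≤ 2√π·Σ_{n=0}^{N} (−1)ⁿ·c_n(ρ)·(8γ)^{−(n+1/2)}·e^{−γ/2}, and if N is odd, then ∫_{−∞}^{∞} ln(1 + ρ·e^{z−2γ})·e^{−z²/(8γ)}·dz/√(8πγ) ≥ 2√π·Σ_{n=0}^{N} (−1)ⁿ·c_n(ρ)·(8γ)^{−(n+1/2)}·e^{−γ/2}. That is, consecutive partial sums of the series 2√π·Σ_{n≥0} (−1)ⁿ·c_n(ρ)·(8γ)^{−(n+1/2)}·e^{−γ/2} are alternately upper and lower bounds to the integral. -/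

import Mathlib

open MeasureTheory Real

/-- `c_n(ρ) = (1/(2π·n!)) ∫ ln(1+ρ·e^z)·z^{2n}·e^{−z/2} dz`. -/
noncomputable def cCoef (n : ℕ) (ρ : ℝ) : ℝ :=
  (1 / (2 * Real.pi * n.factorial)) *
    ∫ z : ℝ, Real.log (1 + ρ * Real.exp z) * z ^ (2 * n) * Real.exp (-z / 2)

/-!
For `x ≥ 0` the Taylor partial sums of `e^{-x}` are alternately above and below it: the `N`-th
error is an antiderivative of the `(N-1)`-th one and vanishes at `0`. The substitution
`z = w + 2γ` turns the integrand into `e^{-γ/2} e^{-w²/(8γ)}` times the nonnegative weight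
`ln(1+ρe^w) e^{-w/2}`, whose `2n`-th moment is `2π n! c_n(ρ)`. Expanding `e^{-w²/(8γ)}` to order
`N` and integrating against this weight gives the partial sums, with the sign of the error.
-/

open Set Finset

theorem hasDerivAt_sum_neg_pow_div_factorial (N : ℕ) (x : ℝ) :
    HasDerivAt (fun y : ℝ => ∑ n ∈ range (N + 2), (-y) ^ n / n.factorial)
      (-∑ n ∈ range (N + 1), (-x) ^ n / n.factorial) x := by
  simp_rw [sum_range_succ' _ (N + 1), pow_zero, Nat.factorial_zero, Nat.cast_one, div_one]
  rw [← sum_neg_distrib, ← add_zero (-_)]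
  refine (HasDerivAt.fun_sum fun n _ => ?_).add_const 1 |>.congr_deriv (by rw [add_zero])
  have h := ((hasDerivAt_id x).neg.pow (n + 1)).div_const ((n + 1).factorial : ℝ)
  refine h.congr_deriv ?_
  rw [Nat.factorial_succ, Nat.cast_mul]
  field_simp
  simp

theorem neg_one_pow_mul_sum_neg_pow_div_factorial_sub_exp_neg_nonneg (N : ℕ) {x : ℝ}
    (hx : 0 ≤ x) :
    0 ≤ (-1) ^ N * (∑ n ∈ range (N + 1), (-x) ^ n / n.factorial - exp (-x)) := by
  induction N generalizing x with
  | zero => simpa using exp_le_one_iff.mpr (neg_nonpos.mpr hx)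
  | succ N ih =>
    set D : ℝ → ℝ := fun y =>
      (-1) ^ (N + 1) * (∑ n ∈ range (N + 2), (-y) ^ n / n.factorial - exp (-y))
    have hD : ∀ y : ℝ, HasDerivAt D
        ((-1) ^ N * (∑ n ∈ range (N + 1), (-y) ^ n / n.factorial - exp (-y))) y :=
      fun y => (((hasDerivAt_sum_neg_pow_div_factorial N y).sub
        (hasDerivAt_neg y).exp).const_mul _).congr_deriv (by ring)
    have hmono : MonotoneOn D (Ici 0) :=
      monotoneOn_of_hasDerivWithinAt_nonneg (convex_Ici 0)
        (fun y _ => (hD y).continuousAt.continuousWithinAt)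
        (fun y _ => (hD y).hasDerivWithinAt) (fun y hy => ih (interior_subset hy))
    simpa [D, sum_range_succ'] using hmono self_mem_Ici hx hx

theorem integrable_exp_neg_mul_abs {c : ℝ} (hc : 0 < c) :
    Integrable fun x : ℝ => exp (-(c * |x|)) := by
  rw [← integrableOn_univ, ← Iic_union_Ioi (a := 0), integrableOn_union]
  constructor
  · refine (integrableOn_exp_mul_Iic hc 0).congr_fun (fun x hx => ?_) measurableSet_Iic
    rw [abs_of_nonpos hx, mul_neg, neg_neg]
  · refine (exp_neg_integrableOn_Ioi 0 hc).congr_fun (fun x hx => ?_) measurableSet_Ioi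
    simp only [abs_of_pos (mem_Ioi.mp hx), neg_mul]

theorem pow_abs_le_mul_exp_abs (m : ℕ) {c : ℝ} (hc : 0 < c) (x : ℝ) :
    |x| ^ m ≤ m.factorial / c ^ m * exp (c * |x|) := by
  have h := pow_div_factorial_le_exp _ (mul_nonneg hc.le (abs_nonneg x)) m
  rw [mul_pow, div_le_iff₀ (by positivity)] at h
  rw [div_mul_eq_mul_div, le_div_iff₀ (by positivity)]
  linarith

theorem integrable_pow_mul_of_abs_le_exp_neg_abs {f : ℝ → ℝ} {C c : ℝ} (hc : 0 < c)
    (hf : AEStronglyMeasurable f) (hfC : ∀ x, |f x| ≤ C * exp (-(c * |x|))) (m : ℕ) :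
    Integrable fun x => x ^ m * f x := by
  have hC : 0 ≤ C := nonneg_of_mul_nonneg_left ((abs_nonneg _).trans (hfC 0)) (exp_pos _)
  refine ((integrable_exp_neg_mul_abs (half_pos hc)).const_mul
    (C * (m.factorial / (c / 2) ^ m))).mono' ((continuous_pow m).aestronglyMeasurable.mul hf)
    (ae_of_all _ fun x => ?_)
  calc ‖x ^ m * f x‖ = |x| ^ m * |f x| := by rw [norm_mul, norm_pow, norm_eq_abs, norm_eq_abs]
    _ ≤ (m.factorial / (c / 2) ^ m * exp (c / 2 * |x|)) * (C * exp (-(c * |x|))) :=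
      mul_le_mul (pow_abs_le_mul_exp_abs m (half_pos hc) x) (hfC x) (abs_nonneg _) (by positivity)
    _ = C * (m.factorial / (c / 2) ^ m) * exp (-(c / 2 * |x|)) := by
      rw [mul_mul_mul_comm, ← exp_add]; ring_nf

theorem neg_one_pow_mul_sum_moment_sub_integral_exp_neg_nonneg {α : Type*} [MeasurableSpace α]
    {μ : Measure α} {X φ : α → ℝ} {t : ℝ} (ht : 0 ≤ t) (hX : ∀ a, 0 ≤ X a)
    (hXm : AEStronglyMeasurable X μ) (hφ : ∀ a, 0 ≤ φ a) (N : ℕ)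
    (hint : ∀ n ≤ N, Integrable (fun a => X a ^ n * φ a) μ) :
    0 ≤ (-1) ^ N * (∑ n ∈ range (N + 1), (-t) ^ n / n.factorial * ∫ a, X a ^ n * φ a ∂μ
      - ∫ a, exp (-(t * X a)) * φ a ∂μ) := by
  have hint' : ∀ n ∈ range (N + 1),
      Integrable (fun a => (-t) ^ n / n.factorial * (X a ^ n * φ a)) μ :=
    fun n hn => (hint n (Nat.lt_succ_iff.mp (mem_range.mp hn))).const_mul _
  have hexp : Integrable (fun a => exp (-(t * X a)) * φ a) μ := by
    refine (hint 0 (Nat.zero_le N)).bdd_mul (f := fun a => exp (-(t * X a))) (c := 1)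
      (by fun_prop) (ae_of_all _ fun a => ?_) |>.congr (ae_of_all _ fun a => by simp)
    rw [norm_of_nonneg (exp_pos _).le, exp_le_one_iff, neg_nonpos]
    exact mul_nonneg ht (hX a)
  simp_rw [← integral_const_mul]
  rw [← integral_finsetSum _ hint', ← integral_sub (integrable_finsetSum _ hint') hexp,
    ← integral_const_mul]
  refine integral_nonneg fun a => ?_
  have h := neg_one_pow_mul_sum_neg_pow_div_factorial_sub_exp_neg_nonneg N (mul_nonneg ht (hX a))
  calc (0 : ℝ) ≤ φ a * ((-1) ^ N * (∑ n ∈ range (N + 1), (-(t * X a)) ^ n / n.factorial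
        - exp (-(t * X a)))) := mul_nonneg (hφ a) h
    _ = _ := by
      simp only [mul_sub, mul_sum]
      congr 1
      · refine sum_congr rfl fun n _ => ?_
        rw [neg_mul_eq_neg_mul, mul_pow]; ring
      · ring

noncomputable def cWeight (ρ w : ℝ) : ℝ := log (1 + ρ * exp w) * exp (-w / 2)

section cWeight

variable {ρ : ℝ}

theorem one_le_one_add_mul_exp (hρ : 0 ≤ ρ) (w : ℝ) : 1 ≤ 1 + ρ * exp w :=
  le_add_of_nonneg_right (by positivity)

theorem cWeight_nonneg (hρ : 0 ≤ ρ) (w : ℝ) : 0 ≤ cWeight ρ w :=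
  mul_nonneg (log_nonneg (one_le_one_add_mul_exp hρ w)) (exp_pos _).le

theorem continuous_cWeight (hρ : 0 ≤ ρ) : Continuous (cWeight ρ) := by
  unfold cWeight
  fun_prop (disch := intro w; linarith [one_le_one_add_mul_exp hρ w])

theorem cWeight_le (hρ : 0 ≤ ρ) (w : ℝ) :
    cWeight ρ w ≤ (ρ + log (1 + ρ) + 4) * exp (-(1 / 4 * |w|)) := by
  have hlogρ : 0 ≤ log (1 + ρ) := log_nonneg (by linarith)
  rcases le_total w 0 with hw | hw
  · have hlog := log_le_sub_one_of_pos (zero_lt_one.trans_le (one_le_one_add_mul_exp hρ w))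
    calc cWeight ρ w ≤ ρ * exp w * exp (-w / 2) := by unfold cWeight; gcongr; linarith
      _ = ρ * exp (w / 2) := by rw [mul_assoc, ← exp_add]; ring_nf
      _ ≤ (ρ + log (1 + ρ) + 4) * exp (-(1 / 4 * |w|)) := by
        rw [abs_of_nonpos hw]; gcongr <;> linarith
  · have hlog' : log (1 + ρ * exp w) ≤ log (1 + ρ) + w := by
      rw [← log_exp w, ← log_mul (by linarith) (exp_pos w).ne', log_exp]
      exact log_le_log (by linarith [one_le_one_add_mul_exp hρ w])
        (by nlinarith [one_le_exp hw])
    have hw4 : w ≤ 4 * exp (w / 4) := by linarith [add_one_le_exp (w / 4)]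
    calc cWeight ρ w ≤ (log (1 + ρ) + 4 * exp (w / 4)) * exp (-w / 2) := by
          unfold cWeight; gcongr; linarith
      _ = log (1 + ρ) * exp (-w / 2) + 4 * exp (-(1 / 4 * w)) := by
        rw [add_mul, mul_assoc, ← exp_add]; ring_nf
      _ ≤ (ρ + log (1 + ρ) + 4) * exp (-(1 / 4 * |w|)) := by
        rw [abs_of_nonneg hw]
        have : exp (-w / 2) ≤ exp (-(1 / 4 * w)) := exp_le_exp.mpr (by linarith)
        nlinarith [exp_pos (-(1 / 4 * w))]

theorem integrable_pow_mul_cWeight (hρ : 0 ≤ ρ) (m : ℕ) :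
    Integrable fun w => w ^ m * cWeight ρ w :=
  integrable_pow_mul_of_abs_le_exp_neg_abs (by norm_num)
    (continuous_cWeight hρ).aestronglyMeasurable
    (fun w => (abs_of_nonneg (cWeight_nonneg hρ w)).trans_le (cWeight_le hρ w)) m

end cWeight

theorem integral_sq_pow_mul_cWeight (n : ℕ) (ρ : ℝ) :
    ∫ w, (w ^ 2) ^ n * cWeight ρ w = 2 * π * n.factorial * cCoef n ρ := by
  rw [cCoef, ← mul_assoc, mul_one_div_cancel (by positivity), one_mul]
  congr 1 with w
  rw [cWeight, ← pow_mul]; ring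

theorem integral_log_one_add_mul_exp_sub_mul_gaussian (ρ : ℝ) {γ : ℝ} (hγ : 0 < γ) :
    ∫ z, log (1 + ρ * exp (z - 2 * γ)) * exp (-z ^ 2 / (8 * γ)) / √(8 * π * γ)
      = exp (-γ / 2) / √(8 * π * γ) * ∫ w, exp (-((8 * γ)⁻¹ * w ^ 2)) * cWeight ρ w := by
  rw [← integral_const_mul,
    ← integral_add_right_eq_self (fun w => exp (-γ / 2) / √(8 * π * γ)
      * (exp (-((8 * γ)⁻¹ * w ^ 2)) * cWeight ρ w)) (-(2 * γ))]
  congr 1 with z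
  have hsq : -z ^ 2 / (8 * γ)
      = -(8 * γ)⁻¹ * (z + -(2 * γ)) ^ 2 + -(z + -(2 * γ)) / 2 + -γ / 2 := by
    field_simp; ring
  rw [cWeight, hsq, exp_add, exp_add, ← sub_eq_add_neg]
  ring_nf

theorem two_sqrt_pi_mul_sum_cCoef_eq (ρ : ℝ) {γ : ℝ} (hγ : 0 < γ) (N : ℕ) :
    2 * √π * ∑ n ∈ range (N + 1), (-1) ^ n * cCoef n ρ / (8 * γ) ^ ((n : ℝ) + 1 / 2)
        * exp (-γ / 2)
      = exp (-γ / 2) / √(8 * π * γ) * ∑ n ∈ range (N + 1), (-(8 * γ)⁻¹) ^ n / n.factorial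
        * ∫ w, (w ^ 2) ^ n * cWeight ρ w := by
  simp_rw [mul_sum, integral_sq_pow_mul_cWeight]
  refine sum_congr rfl fun n _ => ?_
  have h8γ : 0 < 8 * γ := by positivity
  have hsqrt : √(8 * π * γ) = √π * √(8 * γ) := by rw [← sqrt_mul pi_pos.le]; ring_nf
  have hπ : √π ^ 2 = π := sq_sqrt pi_pos.le
  rw [rpow_add h8γ, rpow_natCast, ← sqrt_eq_rpow, hsqrt, neg_pow (8 * γ)⁻¹, inv_pow]
  field_simp
  rw [hπ, mul_comm]

/-- Consecutive partial sums of `2√π·Σₙ (−1)ⁿ·c_n(ρ)·(8γ)^{−(n+1/2)}·e^{−γ/2}` are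
alternately upper (even `N`) and lower (odd `N`) bounds to
`∫ ln(1+ρ·e^{z−2γ})·e^{−z²/(8γ)} dz/√(8πγ)`. -/
theorem stmt2 (ρ γ : ℝ) (hρ : 0 < ρ) (hγ : 0 < γ) (N : ℕ) :
    (Even N →
      (∫ z : ℝ, Real.log (1 + ρ * Real.exp (z - 2 * γ))
          * Real.exp (-z ^ 2 / (8 * γ)) / Real.sqrt (8 * Real.pi * γ))
        ≤ 2 * Real.sqrt Real.pi * ∑ n ∈ Finset.range (N + 1),
            (-1 : ℝ) ^ n * cCoef n ρ / (8 * γ) ^ ((n : ℝ) + 1 / 2) * Real.exp (-γ / 2))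
    ∧ (Odd N →
      2 * Real.sqrt Real.pi * ∑ n ∈ Finset.range (N + 1),
            (-1 : ℝ) ^ n * cCoef n ρ / (8 * γ) ^ ((n : ℝ) + 1 / 2) * Real.exp (-γ / 2)
        ≤ ∫ z : ℝ, Real.log (1 + ρ * Real.exp (z - 2 * γ))
            * Real.exp (-z ^ 2 / (8 * γ)) / Real.sqrt (8 * Real.pi * γ)) := by
  have key := neg_one_pow_mul_sum_moment_sub_integral_exp_neg_nonneg (μ := volume)
    (X := fun w => w ^ 2) (t := (8 * γ)⁻¹) (by positivity) sq_nonneg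
    (continuous_pow 2).aestronglyMeasurable (cWeight_nonneg hρ.le) N
    fun n _ => by simpa only [← pow_mul] using integrable_pow_mul_cWeight hρ.le (2 * n)
  have hK : 0 ≤ exp (-γ / 2) / √(8 * π * γ) := by positivity
  rw [integral_log_one_add_mul_exp_sub_mul_gaussian ρ hγ, two_sqrt_pi_mul_sum_cCoef_eq ρ hγ N]
  refine ⟨fun hN => ?_, fun hN => ?_⟩
  · rw [hN.neg_one_pow, one_mul, sub_nonneg] at key
    exact mul_le_mul_of_nonneg_left key hK
  · rw [hN.neg_one_pow, neg_one_mul, neg_nonneg, sub_nonpos] at key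
    exact mul_le_mul_of_nonneg_left key hK
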